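/- arXiv:2304.12311 — 3 statements merged into one kernel-verified Lean document; each statement's English description precedes it below -/
import Mathlib

section
/- Any doubly stochastic matrix P of size n×n can be written as a convex combination of at most finitely many permutation matrices; i.e., there exist permutation matrices Q^1,...,Q^l and nonnegative coefficients θ_1,...,θ_l summing to 1 such that P = Σ_i θ_i Q^i. -/
open Matrix Finset Real

def IsDoublyStochastic {n : ℕ} (P : Matrix (Fin n) (Fin n) ℝ) : Prop :=
  (∀ i j, 0 ≤ P i j) ∧ (∀ i, ∑ j, P i j = 1) ∧ (∀ j, ∑ i, P i j = 1)

def IsPermutationMatrix {n : ℕ} (Q : Matrix (Fin n) (Fin n) ℝ) : Prop :=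
  (∀ i j, Q i j = 0 ∨ Q i j = 1) ∧ (∀ i, ∑ j, Q i j = 1) ∧ (∀ j, ∑ i, Q i j = 1)

theorem birkhoff_von_neumann {n : ℕ} (P : Matrix (Fin n) (Fin n) ℝ)
    (hP : IsDoublyStochastic P) :
    ∃ (l : ℕ) (θ : Fin l → ℝ) (Q : Fin l → Matrix (Fin n) (Fin n) ℝ),
      (∀ i, 0 ≤ θ i) ∧ (∑ i, θ i = 1) ∧ (∀ i, IsPermutationMatrix (Q i)) ∧
      P = ∑ i, θ i • Q i := by
  have hP' : P ∈ doublyStochastic ℝ (Fin n) := by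
    rw [mem_doublyStochastic_iff_sum]
    exact ⟨hP.1, hP.2.1, hP.2.2⟩
  obtain ⟨w, hw0, hw1, hwP⟩ := exists_eq_sum_perm_of_mem_doublyStochastic hP'
  let e := (Fintype.equivFin (Equiv.Perm (Fin n)))
  refine ⟨Fintype.card (Equiv.Perm (Fin n)), fun i => w (e.symm i),
    fun i => (e.symm i).permMatrix ℝ, fun i => hw0 _, ?_, fun i => ?_, ?_⟩
  · rw [Equiv.sum_comp e.symm w]; exact hw1
  · have hds := permMatrix_mem_doublyStochastic (R := ℝ) (σ := e.symm i)
    rw [mem_doublyStochastic_iff_sum] at hds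
    refine ⟨fun a b => ?_, hds.2.1, hds.2.2⟩
    simp [Equiv.Perm.permMatrix, PEquiv.toMatrix, Equiv.toPEquiv]
    tauto
  · rw [← hwP, ← Equiv.sum_comp e.symm (fun σ => w σ • σ.permMatrix ℝ)]
end

section
/- Let P̂ ∈ ℝ^{m×k} with k < m satisfy P̂ ≥ 0, P̂·1 ≤ 1 (row sums at most 1), and 1ᵀP̂ = 1ᵀ (each column sums to 1). Then there exists a matrix B ∈ ℝ^{m×(m−k)} with nonnegative entries such that the augmented matrix [P̂ B] ∈ ℝ^{m×m} is doubly stochastic. -/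
open Matrix Finset Real

/-!
The row deficits `1 - ∑ⱼ P̂ᵢⱼ` are nonnegative and, since every column of `P̂` sums to one,
they add up to `m - k`. Spreading each deficit evenly over the `m - k` new columns therefore
fills every row up to one and gives every new column the sum `(m - k) / (m - k) = 1`.
-/

section

variable {ι κ : Type*} [Fintype ι] [Fintype κ]

lemma sum_sub_rowSum_eq_card_sub_card {P : Matrix ι κ ℝ} (hcol : ∀ j, ∑ i, P i j = 1) :
    ∑ i, (1 - ∑ j, P i j) = (Fintype.card ι : ℝ) - Fintype.card κ := by
  rw [Finset.sum_sub_distrib, Finset.sum_comm (f := fun i j => P i j)]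
  simp [hcol]

lemma exists_nonneg_rowSum_eq_colSum_eq_one [Nonempty κ] {r : ι → ℝ} (hr : ∀ i, 0 ≤ r i)
    (hsum : ∑ i, r i = Fintype.card κ) :
    ∃ B : Matrix ι κ ℝ, (∀ i j, 0 ≤ B i j) ∧ (∀ i, ∑ j, B i j = r i) ∧
      ∀ j, ∑ i, B i j = 1 := by
  have hcard : (Fintype.card κ : ℝ) ≠ 0 := by positivity
  refine ⟨of fun i _ => r i / Fintype.card κ, fun i _ => div_nonneg (hr i) (Nat.cast_nonneg _),
    fun i => ?_, fun j => ?_⟩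
  · simp only [of_apply, sum_const, card_univ, nsmul_eq_mul]
    field_simp
  · simp only [of_apply, ← Finset.sum_div, hsum]
    exact div_self hcard

end

theorem augment_to_doubly_stochastic_general {m k : ℕ} (hk : k < m)
    (Phat : Matrix (Fin m) (Fin k) ℝ)
    (hrow : ∀ i, ∑ j, Phat i j ≤ 1)
    (hcol : ∀ j, ∑ i, Phat i j = 1) :
    ∃ B : Matrix (Fin m) (Fin (m - k)) ℝ,
      (∀ i j, 0 ≤ B i j) ∧
      (∀ i, (∑ j, Phat i j) + (∑ j, B i j) = 1) ∧
      (∀ j, ∑ i, B i j = 1) := by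
  have : NeZero (m - k) := ⟨by omega⟩
  have hdeficit : ∑ i, (1 - ∑ j, Phat i j) = Fintype.card (Fin (m - k)) := by
    rw [sum_sub_rowSum_eq_card_sub_card hcol]
    simp [Nat.cast_sub hk.le]
  obtain ⟨B, hB0, hBrow, hBcol⟩ :=
    exists_nonneg_rowSum_eq_colSum_eq_one (fun i => sub_nonneg.2 (hrow i)) hdeficit
  exact ⟨B, hB0, fun i => by rw [hBrow]; ring, hBcol⟩

theorem augment_to_doubly_stochastic {m k : ℕ} (hk : k < m)
    (Phat : Matrix (Fin m) (Fin k) ℝ)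
    (h0 : ∀ i j, 0 ≤ Phat i j)
    (hrow : ∀ i, ∑ j, Phat i j ≤ 1)
    (hcol : ∀ j, ∑ i, Phat i j = 1) :
    ∃ B : Matrix (Fin m) (Fin (m - k)) ℝ,
      (∀ i j, 0 ≤ B i j) ∧
      (∀ i, (∑ j, Phat i j) + (∑ j, B i j) = 1) ∧
      (∀ j, ∑ i, B i j = 1) :=
  augment_to_doubly_stochastic_general hk Phat hrow hcol
end

section
/- If P is doubly stochastic, Q is a permutation matrix with support contained in the support of P, and c = min{P_{ij} : Q_{ij} = 1} with 0 < c < 1, then (P − cQ)/(1 − c) is doubly stochastic and has strictly fewer nonzero entries than P. -/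
open Matrix Finset Real

theorem bvn_inductive_step {n : ℕ} (P Q : Matrix (Fin n) (Fin n) ℝ) (c : ℝ)
    (hP : IsDoublyStochastic P) (hQ : IsPermutationMatrix Q)
    (hsupp : ∀ i j, Q i j = 1 → 0 < P i j)
    (hmin : IsLeast {x : ℝ | ∃ i j, Q i j = 1 ∧ P i j = x} c)
    (hc0 : 0 < c) (hc1 : c < 1) :
    IsDoublyStochastic ((1 - c)⁻¹ • (P - c • Q)) ∧
    (Finset.univ.filter
        (fun ij : Fin n × Fin n => ((1 - c)⁻¹ • (P - c • Q)) ij.1 ij.2 ≠ 0)).card <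
      (Finset.univ.filter (fun ij : Fin n × Fin n => P ij.1 ij.2 ≠ 0)).card := by
  obtain ⟨hP0, hPr, hPc⟩ := hP
  obtain ⟨hQ01, hQr, hQc⟩ := hQ
  have h1c : (0:ℝ) < 1 - c := by linarith
  have hE : ∀ i j, ((1 - c)⁻¹ • (P - c • Q)) i j = (1 - c)⁻¹ * (P i j - c * Q i j) := by
    intro i j; simp [Matrix.smul_apply, Matrix.sub_apply]
  have hnn : ∀ i j, 0 ≤ ((1 - c)⁻¹ • (P - c • Q)) i j := by
    intro i j
    rw [hE]
    apply mul_nonneg (le_of_lt (inv_pos.mpr h1c))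
    rcases hQ01 i j with h | h
    · rw [h]; simpa using hP0 i j
    · rw [h, mul_one]
      have : c ≤ P i j := hmin.2 ⟨i, j, h, rfl⟩
      linarith
  refine ⟨⟨hnn, ?_, ?_⟩, ?_⟩
  · intro i
    simp only [hE]
    rw [← Finset.mul_sum, Finset.sum_sub_distrib, ← Finset.mul_sum, hPr, hQr]
    field_simp
  · intro j
    simp only [hE]
    rw [← Finset.mul_sum, Finset.sum_sub_distrib, ← Finset.mul_sum, hPc, hQc]
    field_simp
  · obtain ⟨i₀, j₀, hQ1, hPc0⟩ := hmin.1
    apply Finset.card_lt_card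
    constructor
    · intro ij hij
      simp only [Finset.mem_filter, Finset.mem_univ, true_and] at hij ⊢
      intro h0
      apply hij
      rw [hE, h0]
      rcases hQ01 ij.1 ij.2 with h | h
      · rw [h]; ring
      · exact absurd h0 (hsupp _ _ h).ne'
    · intro hsub
      have h1 : ((i₀, j₀) : Fin n × Fin n) ∈ Finset.univ.filter
          (fun ij : Fin n × Fin n => P ij.1 ij.2 ≠ 0) := by
        simp only [Finset.mem_filter, Finset.mem_univ, true_and]
        exact ne_of_gt (hsupp _ _ hQ1)
      have h2 := hsub h1
      simp only [Finset.mem_filter, Finset.mem_univ, true_and] at h2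
      apply h2
      rw [hE, hQ1, hPc0, mul_one, sub_self, mul_zero]
end
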